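/- Let θ = Θ_S ∘ Λ_{π,t} be an automorphism of B_k, where S ⊆ {1,…,k}, π is a permutation of {1,…,k}, and 0 ≤ t < r. Then there exists a permutation σ_θ of {1,…,2^k} such that for every a ∈ B_k and every 1 ≤ i ≤ 2^k, (Φ_k(θ(a)))_i = ((Φ_k(a))_{σ_θ^{−1}(i)})^{p^t}; that is, the conjugate Φ_k ∘ θ ∘ Φ_k^{−1} is a coordinate permutation of F_{p^r}^{2^k} composed with the entrywise Frobenius power α ↦ α^{p^t}. -/

import Mathlib

open MvPolynomial

set_option synthInstance.maxHeartbeats 400000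
set_option maxHeartbeats 1000000

noncomputable def relIdeal (p r k : ℕ) [Fact p.Prime] : Ideal (MvPolynomial (Fin k) (GaloisField p r)) :=
  Ideal.span (Set.range fun i : Fin k => X i ^ 2 - X i)

abbrev B (p r k : ℕ) [Fact p.Prime] :=
  MvPolynomial (Fin k) (GaloisField p r) ⧸ relIdeal p r k

noncomputable def v (p r k : ℕ) [Fact p.Prime] (i : Fin k) : B p r k :=
  Ideal.Quotient.mk _ (X i)

lemma v_idem (p r k : ℕ) [Fact p.Prime] (i : Fin k) : v p r k i ^ 2 = v p r k i := by
  have h : (X i ^ 2 - X i : MvPolynomial (Fin k) (GaloisField p r)) ∈ relIdeal p r k :=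
    Ideal.subset_span ⟨i, rfl⟩
  have h2 := (Ideal.Quotient.eq_zero_iff_mem).mpr h
  rw [map_sub, map_pow] at h2
  have h3 := sub_eq_zero.mp h2
  simpa [v] using h3

lemma one_sub_v_idem (p r k : ℕ) [Fact p.Prime] (i : Fin k) :
    (1 - v p r k i) ^ 2 = 1 - v p r k i := by
  have h : (1 - v p r k i) ^ 2 = 1 - 2 * v p r k i + v p r k i ^ 2 := by ring
  rw [h, v_idem]; ring

noncomputable def ThAux (p r k : ℕ) [Fact p.Prime] (S : Finset (Fin k)) :
    MvPolynomial (Fin k) (GaloisField p r) →+* B p r k :=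
  (aeval (fun i : Fin k => if i ∈ S then 1 - v p r k i else v p r k i)).toRingHom

lemma ThAux_cond (p r k : ℕ) [Fact p.Prime] (S : Finset (Fin k)) :
    relIdeal p r k ≤ RingHom.ker (ThAux p r k S) := by
  refine Ideal.span_le.mpr ?_
  rintro _ ⟨i, rfl⟩
  simp only [SetLike.mem_coe, RingHom.mem_ker, ThAux, AlgHom.toRingHom_eq_coe,
    RingHom.coe_coe, map_sub, map_pow, aeval_X]
  by_cases h : i ∈ S
  · rw [if_pos h, one_sub_v_idem, sub_self]
  · rw [if_neg h, v_idem, sub_self]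

/-- The automorphism `Θ_S` of `B_k`, determined by `v_i ↦ 1 - v_i` for `i ∈ S` and
`v_i ↦ v_i` otherwise, fixing `F_{p^r}` pointwise. -/
noncomputable def Th (p r k : ℕ) [Fact p.Prime] (S : Finset (Fin k)) :
    B p r k →+* B p r k :=
  Ideal.Quotient.lift (relIdeal p r k) (ThAux p r k S) (fun _ ha => ThAux_cond p r k S ha)

noncomputable def LamAux (p r k : ℕ) [Fact p.Prime] (π : Equiv.Perm (Fin k)) (t : ℕ) :
    MvPolynomial (Fin k) (GaloisField p r) →+* B p r k :=
  eval₂Hom ((Ideal.Quotient.mk (relIdeal p r k)).comp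
      ((C : GaloisField p r →+* MvPolynomial (Fin k) (GaloisField p r)).comp
        (iterateFrobenius (GaloisField p r) p t)))
    (fun i => v p r k (π i))

lemma LamAux_cond (p r k : ℕ) [Fact p.Prime] (π : Equiv.Perm (Fin k)) (t : ℕ) :
    relIdeal p r k ≤ RingHom.ker (LamAux p r k π t) := by
  refine Ideal.span_le.mpr ?_
  rintro _ ⟨i, rfl⟩
  simp only [SetLike.mem_coe, RingHom.mem_ker, LamAux, map_sub, map_pow, eval₂Hom_X']
  rw [v_idem, sub_self]

/-- The automorphism `Λ_{π,t}` of `B_k`, acting on `F_{p^r}` as the Frobenius power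
`α ↦ α^{p^t}` and sending `v_i ↦ v_{π(i)}`. -/
noncomputable def Lam (p r k : ℕ) [Fact p.Prime] (π : Equiv.Perm (Fin k)) (t : ℕ) :
    B p r k →+* B p r k :=
  Ideal.Quotient.lift (relIdeal p r k) (LamAux p r k π t) (fun _ ha => LamAux_cond p r k π t ha)

noncomputable def PhiAux (p r k : ℕ) [Fact p.Prime] :
    MvPolynomial (Fin k) (GaloisField p r) →+* (Fin (2 ^ k) → GaloisField p r) :=
  Pi.ringHom fun j =>
    eval₂Hom (RingHom.id (GaloisField p r))
      (fun i : Fin k => if Nat.testBit (j : ℕ) (i : ℕ) then 1 else 0)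

lemma PhiAux_cond (p r k : ℕ) [Fact p.Prime] :
    relIdeal p r k ≤ RingHom.ker (PhiAux p r k) := by
  refine Ideal.span_le.mpr ?_
  rintro _ ⟨i, rfl⟩
  simp only [SetLike.mem_coe, RingHom.mem_ker, PhiAux]
  funext j
  change (eval₂Hom (RingHom.id (GaloisField p r))
      (fun i : Fin k => if Nat.testBit (j : ℕ) (i : ℕ) then (1 : GaloisField p r) else 0))
      (X i ^ 2 - X i) = 0
  simp only [map_sub, map_pow, eval₂Hom_X']
  by_cases h : Nat.testBit (j : ℕ) (i : ℕ) <;> simp [h]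

/-- The Gray map `Φ_k : B_k → F_{p^r}^{2^k}`: the coordinate indexed by `j` is the
evaluation of (a representative of) an element of `B_k` at the point whose `i`-th
coordinate is the `i`-th binary digit of `j`.  This agrees with the recursive
definition `Φ_k(α + β v_k) = (Φ_{k-1}(α), Φ_{k-1}(α + β))`, `Φ_0 = id`. -/
noncomputable def Phi (p r k : ℕ) [Fact p.Prime] :
    B p r k →+* (Fin (2 ^ k) → GaloisField p r) :=
  Ideal.Quotient.lift (relIdeal p r k) (PhiAux p r k) (fun _ ha => PhiAux_cond p r k ha)

/-!
For fixed `i`, both `a ↦ Φ_k(θ a)_i` and `a ↦ (Φ_k(a)_j)^{p^t}` are ring homomorphisms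
`B_k → F_{p^r}`, so they agree as soon as they agree on scalars (both give `c ^ p ^ t`) and on
the generators `v_m`. The `j`-th coordinate of `Φ_k` sends `v_m` to the `m`-th binary digit of
`j`, and `θ v_m` is `v_{π m}` or `1 - v_{π m}`, whose `i`-th coordinate is the `π m`-th digit of
`i`, flipped when `π m ∈ S`. So `j` is obtained from `i` by reading its digits through `π` and
flipping those in `S`, a permutation of `{0,1}^k`.
-/

namespace Nat

noncomputable def binaryDigitsEquiv (k : ℕ) : Fin (2 ^ k) ≃ (Fin k → Bool) :=
  Equiv.ofBijective (fun j i => testBit j i) <| by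
    refine (Fintype.bijective_iff_injective_and_card _).2 ⟨fun a b h => ?_, by simp⟩
    refine Fin.ext (eq_of_testBit_eq fun i => ?_)
    by_cases hi : i < k
    · exact congrFun h ⟨i, hi⟩
    · have hk : 2 ^ k ≤ 2 ^ i := Nat.pow_le_pow_right two_pos (not_lt.1 hi)
      rw [testBit_eq_false_of_lt (a.2.trans_le hk), testBit_eq_false_of_lt (b.2.trans_le hk)]

@[simp]
theorem binaryDigitsEquiv_apply {k : ℕ} (j : Fin (2 ^ k)) (i : Fin k) :
    binaryDigitsEquiv k j i = testBit j i :=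
  rfl

@[simp]
theorem testBit_binaryDigitsEquiv_symm {k : ℕ} (g : Fin k → Bool) (i : Fin k) :
    testBit ((binaryDigitsEquiv k).symm g) i = g i :=
  congrFun ((binaryDigitsEquiv k).apply_symm_apply g) i

end Nat

section

variable {p r k : ℕ} [Fact p.Prime]

theorem B.ringHom_ext {R : Type*} [Semiring R] {f g : B p r k →+* R}
    (h_algebraMap : ∀ c, f (algebraMap (GaloisField p r) _ c) = g (algebraMap _ _ c))
    (h_v : ∀ i, f (v p r k i) = g (v p r k i)) : f = g :=
  Ideal.Quotient.ringHom_ext (MvPolynomial.ringHom_ext h_algebraMap h_v)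

@[simp]
theorem Th_algebraMap (S : Finset (Fin k)) (c : GaloisField p r) :
    Th p r k S (algebraMap _ _ c) = algebraMap _ _ c :=
  (Ideal.Quotient.lift_mk _ _ _).trans (aeval_C _ _)

@[simp]
theorem Th_v (S : Finset (Fin k)) (i : Fin k) :
    Th p r k S (v p r k i) = if i ∈ S then 1 - v p r k i else v p r k i :=
  (Ideal.Quotient.lift_mk _ _ _).trans (aeval_X _ _)

@[simp]
theorem Lam_algebraMap (π : Equiv.Perm (Fin k)) (t : ℕ) (c : GaloisField p r) :
    Lam p r k π t (algebraMap _ _ c) = algebraMap _ _ (c ^ p ^ t) :=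
  (Ideal.Quotient.lift_mk _ _ _).trans (eval₂Hom_C _ _ _)

@[simp]
theorem Lam_v (π : Equiv.Perm (Fin k)) (t : ℕ) (i : Fin k) :
    Lam p r k π t (v p r k i) = v p r k (π i) :=
  (Ideal.Quotient.lift_mk _ _ _).trans (eval₂Hom_X' _ _ _)

@[simp]
theorem Phi_algebraMap_apply (c : GaloisField p r) (j : Fin (2 ^ k)) :
    Phi p r k (algebraMap _ _ c) j = c :=
  (congrFun (Ideal.Quotient.lift_mk _ _ _) j).trans (eval₂Hom_C _ _ _)

@[simp]
theorem Phi_v_apply (i : Fin k) (j : Fin (2 ^ k)) :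
    Phi p r k (v p r k i) j = if Nat.testBit j i then 1 else 0 :=
  (congrFun (Ideal.Quotient.lift_mk _ _ _) j).trans (eval₂Hom_X' _ _ _)

def digitPerm (S : Finset (Fin k)) (π : Equiv.Perm (Fin k)) : Equiv.Perm (Fin k → Bool) where
  toFun g m := xor (g (π m)) (decide (π m ∈ S))
  invFun g m := xor (g (π.symm m)) (decide (m ∈ S))
  left_inv g := by funext m; simp
  right_inv g := by funext m; simp

noncomputable def indexPerm (S : Finset (Fin k)) (π : Equiv.Perm (Fin k)) :
    Equiv.Perm (Fin (2 ^ k)) :=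
  (Nat.binaryDigitsEquiv k).symm.permCongr (digitPerm S π)

theorem Phi_Th_Lam_apply (S : Finset (Fin k)) (π : Equiv.Perm (Fin k)) (t : ℕ) (a : B p r k)
    (i : Fin (2 ^ k)) :
    Phi p r k (Th p r k S (Lam p r k π t a)) i =
      Phi p r k a (indexPerm S π i) ^ p ^ t := by
  let evalAt (j : Fin (2 ^ k)) := Pi.evalRingHom (fun _ => GaloisField p r) j
  suffices (evalAt i).comp ((Phi p r k).comp ((Th p r k S).comp (Lam p r k π t))) =
      (iterateFrobenius (GaloisField p r) p t).comp ((evalAt (indexPerm S π i)).comp (Phi p r k))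
    from RingHom.congr_fun this a
  refine B.ringHom_ext (fun c => ?_) (fun m => ?_)
  · simp [evalAt, iterateFrobenius_def]
  · by_cases hS : π m ∈ S <;> by_cases hb : Nat.testBit i (π m) <;>
      simp [evalAt, indexPerm, digitPerm, hS, hb]

end

theorem stmt_13_general (p r k : ℕ) [Fact p.Prime]
    (S : Finset (Fin k)) (π : Equiv.Perm (Fin k)) (t : ℕ) :
    ∃ σ : Equiv.Perm (Fin (2 ^ k)), ∀ (a : B p r k) (i : Fin (2 ^ k)),
      Phi p r k (Th p r k S (Lam p r k π t a)) i =
        Phi p r k a (σ.symm i) ^ p ^ t :=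
  ⟨(indexPerm S π).symm, Phi_Th_Lam_apply S π t⟩

/-- For `θ = Θ_S ∘ Λ_{π,t}` there is a permutation `σ_θ` of `{1,…,2^k}` such that
`Φ_k(θ(a))_i = (Φ_k(a)_{σ_θ⁻¹(i)})^{p^t}` for all `a ∈ B_k` and all `i`. -/
theorem stmt_13 (p r k : ℕ) [Fact p.Prime] (hr : 1 ≤ r)
    (S : Finset (Fin k)) (π : Equiv.Perm (Fin k)) (t : ℕ) (ht : t < r) :
    ∃ σ : Equiv.Perm (Fin (2 ^ k)), ∀ (a : B p r k) (i : Fin (2 ^ k)),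
      Phi p r k (Th p r k S (Lam p r k π t a)) i =
        Phi p r k a (σ.symm i) ^ p ^ t :=
  stmt_13_general p r k S π t
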